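/- Let H = (V,E,w) be an edge-weighted hypergraph and let f_1, …, f_k be nonzero vectors in ℝ^V that are pairwise orthogonal in the weighted inner product. Then every nonzero h ∈ span{f_1,…,f_k} satisfies D_w(h) ≤ k · max_{i ∈ [k]} D_w(f_i); consequently ζ_k ≤ k · max_{i ∈ [k]} D_w(f_i). Moreover, if the vectors f_1, …, f_k have pairwise disjoint supports, then every nonzero h ∈ span{f_1,…,f_k} satisfies D_w(h) ≤ 2 · max_{i ∈ [k]} D_w(f_i), and hence ζ_k ≤ 2 · max_{i ∈ [k]} D_w(f_i). -/

import Mathlib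

open Finset

/-- An edge-weighted hypergraph on a finite vertex set `V`: a finite set of hyperedges,
each a nonempty subset of `V`, with positive weights. -/
structure WHypergraph (V : Type*) [Fintype V] [DecidableEq V] where
  E : Finset (Finset V)
  w : Finset V → ℝ
  edge_nonempty : ∀ e ∈ E, e.Nonempty
  w_pos : ∀ e ∈ E, 0 < w e

namespace WHypergraph

variable {V : Type*} [Fintype V] [DecidableEq V]

/-- The weight of a vertex: total weight of hyperedges containing it. -/
noncomputable def wv (H : WHypergraph V) (v : V) : ℝ :=
  ∑ e ∈ H.E.filter (fun e => v ∈ e), H.w e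

/-- The weight of a set of vertices. -/
noncomputable def wS (H : WHypergraph V) (S : Finset V) : ℝ := ∑ v ∈ S, H.wv v

/-- The boundary of `S`: hyperedges meeting both `S` and its complement. -/
noncomputable def bdry (H : WHypergraph V) (S : Finset V) : Finset (Finset V) :=
  H.E.filter (fun e => (e ∩ S).Nonempty ∧ (e \ S).Nonempty)

/-- The expansion `φ(S)` of a set of vertices. -/
noncomputable def phi (H : WHypergraph V) (S : Finset V) : ℝ :=
  (∑ e ∈ H.bdry S, H.w e) / H.wS S

/-- `max_{u,v ∈ e} (f u - f v)^2`. -/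
noncomputable def edgeDisc (H : WHypergraph V) (f : V → ℝ) (e : Finset V) : ℝ :=
  sSup {x : ℝ | ∃ u ∈ e, ∃ v ∈ e, (f u - f v) ^ 2 = x}

/-- The discrepancy ratio `D_w(f)`. -/
noncomputable def disc (H : WHypergraph V) (f : V → ℝ) : ℝ :=
  (∑ e ∈ H.E, H.w e * H.edgeDisc f e) / ∑ u : V, H.wv u * f u ^ 2

/-- The weighted inner product `⟨f,g⟩_w`. -/
noncomputable def wip (H : WHypergraph V) (f g : V → ℝ) : ℝ :=
  ∑ u : V, H.wv u * f u * g u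

/-- `γ₂`: infimum of the discrepancy ratio over nonzero `f ⊥_w 1`. -/
noncomputable def gamma2 (H : WHypergraph V) : ℝ :=
  sInf {x : ℝ | ∃ f : V → ℝ, f ≠ 0 ∧ H.wip f (fun _ => 1) = 0 ∧ H.disc f = x}

/-- The hypergraph expansion `φ_H`. -/
noncomputable def phiH (H : WHypergraph V) : ℝ :=
  sInf {x : ℝ | ∃ S : Finset V, S.Nonempty ∧ S ≠ univ ∧
    x = max (H.phi S) (H.phi Sᶜ)}

/-- `ζ_k`: inf over `k`-tuples of nonzero pairwise `w`-orthogonal vectors of the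
sup of the discrepancy ratio over nonzero vectors in their span. -/
noncomputable def zeta (H : WHypergraph V) (k : ℕ) : ℝ :=
  sInf {x : ℝ | ∃ f : Fin k → V → ℝ, (∀ i, f i ≠ 0) ∧
    (∀ i j, i ≠ j → H.wip (f i) (f j) = 0) ∧
    x = sSup {y : ℝ | ∃ h : V → ℝ, h ≠ 0 ∧
      h ∈ Submodule.span ℝ (Set.range f) ∧ H.disc h = y}}

/-- `ξ_k`: inf over `k`-tuples of nonzero pairwise `w`-orthogonal vectors of the
maximum discrepancy ratio among them. -/
noncomputable def xi (H : WHypergraph V) (k : ℕ) : ℝ :=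
  sInf {x : ℝ | ∃ f : Fin k → V → ℝ, (∀ i, f i ≠ 0) ∧
    (∀ i j, i ≠ j → H.wip (f i) (f j) = 0) ∧
    x = sSup {y : ℝ | ∃ i, H.disc (f i) = y}}

/-- A sequence of procedural minimizers: `f 0` is a nonzero constant vector, each `f i`
is nonzero and `w`-orthogonal to the previous ones, and attains the infimum of the
discrepancy ratio over nonzero vectors `w`-orthogonal to the previous ones. -/
def IsProcMin (H : WHypergraph V) {k : ℕ} (f : Fin k → V → ℝ) : Prop :=
  (∀ i, f i ≠ 0) ∧
  (∀ i : Fin k, (i : ℕ) = 0 → ∃ c : ℝ, f i = fun _ => c) ∧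
  (∀ i j : Fin k, (j : ℕ) < (i : ℕ) → H.wip (f i) (f j) = 0) ∧
  (∀ i : Fin k, 0 < (i : ℕ) → H.disc (f i) =
    sInf {x : ℝ | ∃ g : V → ℝ, g ≠ 0 ∧
      (∀ j : Fin k, (j : ℕ) < (i : ℕ) → H.wip g (f j) = 0) ∧ H.disc g = x})

end WHypergraph

/-!
Write `h = ∑ aᵢ fᵢ`. By `w`-orthogonality the denominator of `D_w(h)` is
`∑ aᵢ² ‖fᵢ‖²_w`. For `u, v` in an edge, Cauchy–Schwarz gives
`(h u - h v)² ≤ N · ∑ aᵢ² (fᵢ u - fᵢ v)²`, where `N` is the number of indices with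
`fᵢ u ≠ fᵢ v`. Summing over edges, the numerator of `D_w(h)` is at most
`N ∑ aᵢ² E(fᵢ) ≤ N ξ ∑ aᵢ² ‖fᵢ‖²_w`, where `E(fᵢ)` is the numerator of `D_w(fᵢ)` and
`ξ = maxᵢ D_w(fᵢ)`. Always `N ≤ k`, and `N ≤ 2` when the supports are disjoint,
since then at most one `fᵢ` is nonzero at `u` and at most one at `v`.
-/

theorem sq_sum_le_card_filter_ne_zero_mul_sum_sq {ι : Type*} (s : Finset ι) (t : ι → ℝ) :
    (∑ i ∈ s, t i) ^ 2 ≤ #{i ∈ s | t i ≠ 0} * ∑ i ∈ s, t i ^ 2 := by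
  rw [← sum_filter_ne_zero s]
  calc (∑ i ∈ s with t i ≠ 0, t i) ^ 2
      ≤ #{i ∈ s | t i ≠ 0} * ∑ i ∈ s with t i ≠ 0, t i ^ 2 := sq_sum_le_card_mul_sum_sq
    _ ≤ #{i ∈ s | t i ≠ 0} * ∑ i ∈ s, t i ^ 2 := by
      gcongr
      exact filter_subset _ _

section DisjointSupports

variable {ι V : Type*} [Fintype ι] {f : ι → V → ℝ}

theorem card_filter_apply_ne_zero_le_one
    (hdisj : ∀ i j, i ≠ j → ∀ u, f i u = 0 ∨ f j u = 0) (u : V) :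
    #{i | f i u ≠ 0} ≤ 1 := by
  refine card_le_one.mpr fun i hi j hj => ?_
  simp only [mem_filter, mem_univ, true_and] at hi hj
  by_contra hij
  exact (hdisj i j hij u).elim hi hj

theorem card_filter_apply_ne_apply_le_two [DecidableEq ι]
    (hdisj : ∀ i j, i ≠ j → ∀ u, f i u = 0 ∨ f j u = 0) (u v : V) :
    #{i | f i u ≠ f i v} ≤ 2 := by
  have hsub : univ.filter (fun i => f i u ≠ f i v) ⊆
      univ.filter (f · u ≠ 0) ∪ univ.filter (f · v ≠ 0) := by
    intro i hi
    simp only [mem_filter, mem_univ, true_and, mem_union] at hi ⊢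
    by_contra! h0
    exact hi (h0.1.trans h0.2.symm)
  calc #{i | f i u ≠ f i v} ≤ #(univ.filter (f · u ≠ 0) ∪ univ.filter (f · v ≠ 0)) :=
        card_le_card hsub
    _ ≤ 1 + 1 := (card_union_le _ _).trans <| add_le_add
        (card_filter_apply_ne_zero_le_one hdisj u) (card_filter_apply_ne_zero_le_one hdisj v)

end DisjointSupports

namespace WHypergraph

variable {V : Type*} [Fintype V] [DecidableEq V] (H : WHypergraph V)

noncomputable def energy (f : V → ℝ) : ℝ :=
  ∑ e ∈ H.E, H.w e * H.edgeDisc f e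

theorem sq_sub_le_edgeDisc (f : V → ℝ) {e : Finset V} {u v : V} (hu : u ∈ e) (hv : v ∈ e) :
    (f u - f v) ^ 2 ≤ H.edgeDisc f e := by
  refine le_csSup ?_ ⟨u, hu, v, hv, rfl⟩
  refine (Set.finite_range fun p : V × V => (f p.1 - f p.2) ^ 2).subset ?_ |>.bddAbove
  rintro _ ⟨u, -, v, -, rfl⟩
  exact ⟨(u, v), rfl⟩

theorem edgeDisc_nonneg (f : V → ℝ) (e : Finset V) : 0 ≤ H.edgeDisc f e :=
  Real.sSup_nonneg <| by
    rintro _ ⟨u, -, v, -, rfl⟩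
    exact sq_nonneg _

theorem edgeDisc_le {f : V → ℝ} {e : Finset V} {B : ℝ} (hB : 0 ≤ B)
    (hb : ∀ u ∈ e, ∀ v ∈ e, (f u - f v) ^ 2 ≤ B) : H.edgeDisc f e ≤ B :=
  Real.sSup_le (by rintro _ ⟨u, hu, v, hv, rfl⟩; exact hb u hu v hv) hB

theorem energy_nonneg (f : V → ℝ) : 0 ≤ H.energy f :=
  sum_nonneg fun e he => mul_nonneg (H.w_pos e he).le (H.edgeDisc_nonneg f e)

theorem wv_nonneg (v : V) : 0 ≤ H.wv v :=
  sum_nonneg fun e he => (H.w_pos e (mem_filter.mp he).1).le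

theorem wip_self (f : V → ℝ) : H.wip f f = ∑ u, H.wv u * f u ^ 2 := by
  simp only [wip, sq, mul_assoc]

theorem wip_self_nonneg (f : V → ℝ) : 0 ≤ H.wip f f := by
  rw [wip_self]
  exact sum_nonneg fun u _ => mul_nonneg (H.wv_nonneg u) (sq_nonneg _)

theorem wip_self_pos (hw : ∀ v, 0 < H.wv v) {f : V → ℝ} (hf : f ≠ 0) : 0 < H.wip f f := by
  obtain ⟨u, hu⟩ := Function.ne_iff.mp hf
  rw [wip_self]
  exact sum_pos' (fun v _ => mul_nonneg (hw v).le (sq_nonneg _))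
    ⟨u, mem_univ u, mul_pos (hw u) (sq_pos_of_ne_zero hu)⟩

theorem wip_comm (f g : V → ℝ) : H.wip f g = H.wip g f := by
  simp only [wip, mul_right_comm]

theorem wip_sum_smul_left {ι : Type*} (s : Finset ι) (a : ι → ℝ) (f : ι → V → ℝ)
    (g : V → ℝ) : H.wip (∑ i ∈ s, a i • f i) g = ∑ i ∈ s, a i * H.wip (f i) g := by
  simp only [wip, Finset.sum_apply, Pi.smul_apply, smul_eq_mul, mul_sum, sum_mul]
  rw [sum_comm]
  exact sum_congr rfl fun i _ => sum_congr rfl fun u _ => by ring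

theorem wip_sum_smul_self_of_orthogonal {ι : Type*} [Fintype ι] (a : ι → ℝ)
    {f : ι → V → ℝ} (horth : ∀ i j, i ≠ j → H.wip (f i) (f j) = 0) :
    H.wip (∑ i, a i • f i) (∑ i, a i • f i) = ∑ i, a i ^ 2 * H.wip (f i) (f i) := by
  rw [wip_sum_smul_left]
  refine sum_congr rfl fun i _ => ?_
  rw [wip_comm, wip_sum_smul_left, sum_eq_single i, wip_comm]
  · ring
  · intro j _ hji
    rw [horth j i hji, mul_zero]
  · exact fun hi => absurd (mem_univ i) hi

theorem disc_eq_energy_div (f : V → ℝ) : H.disc f = H.energy f / H.wip f f := by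
  rw [disc, wip_self, energy]

theorem disc_nonneg (f : V → ℝ) : 0 ≤ H.disc f := by
  rw [disc_eq_energy_div]
  exact div_nonneg (H.energy_nonneg f) (H.wip_self_nonneg f)

theorem disc_le_iff (hw : ∀ v, 0 < H.wv v) {f : V → ℝ} (hf : f ≠ 0) {ξ : ℝ} :
    H.disc f ≤ ξ ↔ H.energy f ≤ ξ * H.wip f f := by
  rw [disc_eq_energy_div, div_le_iff₀ (H.wip_self_pos hw hf)]

variable {ι : Type*} [Fintype ι]

theorem edgeDisc_sum_smul_le (a : ι → ℝ) (f : ι → V → ℝ) {e : Finset V} {C : ℕ}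
    (hC : ∀ u ∈ e, ∀ v ∈ e, #{i | f i u ≠ f i v} ≤ C) :
    H.edgeDisc (∑ i, a i • f i) e ≤ C * ∑ i, a i ^ 2 * H.edgeDisc (f i) e := by
  have hbound : 0 ≤ C * ∑ i, a i ^ 2 * H.edgeDisc (f i) e :=
    mul_nonneg C.cast_nonneg <|
      sum_nonneg fun i _ => mul_nonneg (sq_nonneg _) (H.edgeDisc_nonneg _ e)
  refine H.edgeDisc_le hbound fun u hu v hv => ?_
  have hdiff : (∑ i, a i • f i) u - (∑ i, a i • f i) v = ∑ i, a i * (f i u - f i v) := by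
    simp only [Finset.sum_apply, Pi.smul_apply, smul_eq_mul, mul_sub, sum_sub_distrib]
  have hcard : #{i | a i * (f i u - f i v) ≠ 0} ≤ C :=
    (card_le_card fun i => by
      simpa only [mem_filter, mem_univ, true_and] using
        fun hi => sub_ne_zero.mp (right_ne_zero_of_mul hi)).trans (hC u hu v hv)
  calc ((∑ i, a i • f i) u - (∑ i, a i • f i) v) ^ 2
      ≤ #{i | a i * (f i u - f i v) ≠ 0} * ∑ i, (a i * (f i u - f i v)) ^ 2 := by
        rw [hdiff]
        exact sq_sum_le_card_filter_ne_zero_mul_sum_sq _ _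
    _ ≤ C * ∑ i, a i ^ 2 * H.edgeDisc (f i) e := by
        simp only [mul_pow]
        gcongr with i
        exact H.sq_sub_le_edgeDisc (f i) hu hv

theorem energy_sum_smul_le (a : ι → ℝ) (f : ι → V → ℝ) {C : ℕ}
    (hC : ∀ u v, #{i | f i u ≠ f i v} ≤ C) :
    H.energy (∑ i, a i • f i) ≤ C * ∑ i, a i ^ 2 * H.energy (f i) :=
  calc H.energy (∑ i, a i • f i)
      ≤ ∑ e ∈ H.E, H.w e * (C * ∑ i, a i ^ 2 * H.edgeDisc (f i) e) :=
        sum_le_sum fun e he => mul_le_mul_of_nonneg_left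
          (H.edgeDisc_sum_smul_le a f fun u _ v _ => hC u v) (H.w_pos e he).le
    _ = C * ∑ i, a i ^ 2 * H.energy (f i) := by
        simp only [energy, mul_sum]
        rw [sum_comm]
        exact sum_congr rfl fun i _ => sum_congr rfl fun e _ => by ring

theorem disc_sum_smul_le (hw : ∀ v, 0 < H.wv v) {f : ι → V → ℝ} (hf0 : ∀ i, f i ≠ 0)
    (horth : ∀ i j, i ≠ j → H.wip (f i) (f j) = 0) {C : ℕ}
    (hC : ∀ u v, #{i | f i u ≠ f i v} ≤ C) {ξ : ℝ} (hξ : ∀ i, H.disc (f i) ≤ ξ)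
    {a : ι → ℝ} (hh : ∑ i, a i • f i ≠ 0) :
    H.disc (∑ i, a i • f i) ≤ C * ξ := by
  rw [H.disc_le_iff hw hh, H.wip_sum_smul_self_of_orthogonal a horth]
  calc H.energy (∑ i, a i • f i) ≤ C * ∑ i, a i ^ 2 * H.energy (f i) :=
        H.energy_sum_smul_le a f hC
    _ ≤ C * ∑ i, a i ^ 2 * (ξ * H.wip (f i) (f i)) := by
        gcongr with i
        exact (H.disc_le_iff hw (hf0 i)).mp (hξ i)
    _ = C * ξ * ∑ i, a i ^ 2 * H.wip (f i) (f i) := by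
        simp only [mul_sum]
        exact sum_congr rfl fun i _ => by ring

theorem zeta_le_sSup_disc {k : ℕ} {f : Fin k → V → ℝ} (hf0 : ∀ i, f i ≠ 0)
    (horth : ∀ i j, i ≠ j → H.wip (f i) (f j) = 0) :
    H.zeta k ≤ sSup {y : ℝ | ∃ h : V → ℝ, h ≠ 0 ∧
      h ∈ Submodule.span ℝ (Set.range f) ∧ H.disc h = y} := by
  refine csInf_le ⟨0, ?_⟩ ⟨f, hf0, horth, rfl⟩
  rintro _ ⟨g, -, -, rfl⟩
  exact Real.sSup_nonneg <| by
    rintro _ ⟨h, -, -, rfl⟩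
    exact H.disc_nonneg h

theorem zeta_le_of_forall_disc_le {k : ℕ} {f : Fin k → V → ℝ} (hf0 : ∀ i, f i ≠ 0)
    (horth : ∀ i j, i ≠ j → H.wip (f i) (f j) = 0) {B : ℝ} (hB : 0 ≤ B)
    (hspan : ∀ h : V → ℝ, h ≠ 0 → h ∈ Submodule.span ℝ (Set.range f) →
      H.disc h ≤ B) :
    H.zeta k ≤ B :=
  (H.zeta_le_sSup_disc hf0 horth).trans <| Real.sSup_le
    (by rintro _ ⟨h, hh, hmem, rfl⟩; exact hspan h hh hmem) hB

end WHypergraph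

/-- Span bound: for nonzero pairwise `w`-orthogonal `f_1, …, f_k`, every nonzero `h` in
their span satisfies `D_w(h) ≤ k · max_i D_w(f_i)` (hence `ζ_k ≤ k · max_i D_w(f_i)`);
if moreover the supports are pairwise disjoint, `D_w(h) ≤ 2 · max_i D_w(f_i)`
(hence `ζ_k ≤ 2 · max_i D_w(f_i)`). -/
theorem disc_span_bound {V : Type*} [Fintype V] [DecidableEq V]
    (H : WHypergraph V) (hw : ∀ v : V, 0 < H.wv v)
    (k : ℕ) (hk : 0 < k) (f : Fin k → V → ℝ)
    (hf0 : ∀ i, f i ≠ 0)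
    (horth : ∀ i j, i ≠ j → H.wip (f i) (f j) = 0)
    (ξ : ℝ)
    (hξ : ξ = Finset.univ.sup' (Finset.univ_nonempty_iff.mpr ⟨⟨0, hk⟩⟩)
      (fun i => H.disc (f i))) :
    ((∀ h : V → ℝ, h ≠ 0 → h ∈ Submodule.span ℝ (Set.range f) →
        H.disc h ≤ k * ξ) ∧
      H.zeta k ≤ k * ξ) ∧
    ((∀ i j, i ≠ j → ∀ u : V, f i u = 0 ∨ f j u = 0) →
      (∀ h : V → ℝ, h ≠ 0 → h ∈ Submodule.span ℝ (Set.range f) →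
        H.disc h ≤ 2 * ξ) ∧
      H.zeta k ≤ 2 * ξ) := by
  have hξi : ∀ i, H.disc (f i) ≤ ξ := fun i =>
    hξ ▸ le_sup' (fun i => H.disc (f i)) (mem_univ i)
  have hξ0 : 0 ≤ ξ := (H.disc_nonneg _).trans (hξi ⟨0, hk⟩)
  have span_bound (C : ℕ) (hC : ∀ u v, #{i | f i u ≠ f i v} ≤ C) (h : V → ℝ)
      (hh : h ≠ 0) (hmem : h ∈ Submodule.span ℝ (Set.range f)) : H.disc h ≤ C * ξ := by
    obtain ⟨a, rfl⟩ := (Submodule.mem_span_range_iff_exists_fun ℝ).mp hmem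
    exact H.disc_sum_smul_le hw hf0 horth hC hξi hh
  have span_bound_k := span_bound k fun u v => (card_filter_le _ _).trans (card_fin k).le
  refine ⟨⟨span_bound_k, H.zeta_le_of_forall_disc_le hf0 horth (by positivity) span_bound_k⟩,
    fun hdisj => ?_⟩
  have span_bound_two : ∀ h : V → ℝ, h ≠ 0 → h ∈ Submodule.span ℝ (Set.range f) →
      H.disc h ≤ 2 * ξ := by
    exact_mod_cast span_bound 2 (card_filter_apply_ne_apply_le_two hdisj)
  exact ⟨span_bound_two, H.zeta_le_of_forall_disc_le hf0 horth (by positivity) span_bound_two⟩
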